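/- arXiv:1405.5069 — 2 statements merged into one kernel-verified Lean document; each statement's English description precedes it below -/
import Mathlib

section
/- A compact invariant set Λ on which both bundles of a dominated splitting are uniformly contracted/expanded along the orbit—that is, lim_{t→∞} ‖P_t(x)|_{N^s_x}‖ = 0 and lim_{t→∞} ‖P_{−t}(x)|_{N^u_x}‖ = 0 pointwise for all x ∈ Λ with the splitting dominated—admits uniform exponential estimates: there exist K, λ > 0 with ‖P_t(x)|_{N^s_x}‖ ≤ K e^{−λt} and ‖P_{−t}(x)|_{N^u_x}‖ ≤ K e^{−λt} for all x ∈ Λ, t ≥ 0. -/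
/-!
Each bundle is handled on its own. By compactness of `Λ`, the pointwise limit gives a uniform
time `T₀` such that every point of `Λ` reaches contraction `1/2` at some time `τ ∈ [1, T₀]`.
Submultiplicativity then halves the norm at least once per time `T₀`, while on `[0, T₀] × Λ`
the norm is bounded by continuity: this is decay at rate `log 2 / T₀`.
-/

open Set Filter Topology Real

section ExponentialDecay

variable {X : Type*} {Λ : Set X} {c : ℝ → X → ℝ}

def HasUniformExpDecay (Λ : Set X) (c : ℝ → X → ℝ) (K lam : ℝ) : Prop :=
  ∀ x ∈ Λ, ∀ t ≥ (0 : ℝ), c t x ≤ K * exp (-lam * t)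

lemma HasUniformExpDecay.mono {K K' lam lam' : ℝ} (h : HasUniformExpDecay Λ c K lam)
    (hK₀ : 0 ≤ K) (hK : K ≤ K') (hlam : lam' ≤ lam) : HasUniformExpDecay Λ c K' lam' := by
  intro x hx t ht
  calc c t x ≤ K * exp (-lam * t) := h x hx t ht
    _ ≤ K' * exp (-lam' * t) := by gcongr; nlinarith

lemma exists_uniform_time_lt [TopologicalSpace X] (hΛ : IsCompact Λ)
    (hc : ∀ t, Continuous (c t)) (hlim : ∀ x ∈ Λ, Tendsto (c · x) atTop (𝓝 0))
    (t₀ : ℝ) {r : ℝ} (hr : 0 < r) :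
    ∃ T₀ ≥ t₀, ∀ x ∈ Λ, ∃ τ ∈ Icc t₀ T₀, c τ x < r := by
  let U : ℝ → Set X := fun T ↦ ⋃ τ ∈ Icc t₀ T, {y | c τ y < r}
  have hU_open (T : ℝ) : IsOpen (U T) :=
    isOpen_biUnion fun τ _ ↦ isOpen_lt (hc τ) continuous_const
  have hU_mono : Monotone U := fun _ _ hST ↦
    biUnion_subset_biUnion_left (Icc_subset_Icc_right hST)
  have hΛU : Λ ⊆ ⋃ T, U T := by
    intro x hx
    obtain ⟨τ, hτ₀, hτr⟩ :=
      ((eventually_ge_atTop t₀).and ((hlim x hx).eventually (gt_mem_nhds hr))).exists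
    exact mem_iUnion.2 ⟨τ, mem_biUnion ⟨hτ₀, le_rfl⟩ hτr⟩
  obtain ⟨T₀, hT₀⟩ := hΛ.elim_directed_cover U hU_open hΛU hU_mono.directed_le
  refine ⟨max t₀ T₀, le_max_left _ _, fun x hx ↦ ?_⟩
  obtain ⟨τ, hτ, hτr⟩ : ∃ τ ∈ Icc t₀ T₀, c τ x < r := by simpa [U] using hT₀ hx
  exact ⟨τ, Icc_subset_Icc_right (le_max_right _ _) hτ, hτr⟩

variable {ψ : ℝ → X → X}

lemma hasUniformExpDecay_of_contraction_time
    (hψ : ∀ t ≥ (0 : ℝ), MapsTo (ψ t) Λ Λ)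
    (hc_nonneg : ∀ t ≥ (0 : ℝ), ∀ x ∈ Λ, 0 ≤ c t x)
    (hcocycle : ∀ s ≥ (0 : ℝ), ∀ t ≥ (0 : ℝ), ∀ x ∈ Λ, c (s + t) x ≤ c s (ψ t x) * c t x)
    {C T₀ : ℝ} (hC₀ : 0 ≤ C) (hT₀ : 0 < T₀) (hC : ∀ t ∈ Icc 0 T₀, ∀ x ∈ Λ, c t x ≤ C)
    (hcontr : ∀ x ∈ Λ, ∃ τ ∈ Icc 1 T₀, c τ x ≤ 1 / 2) :
    HasUniformExpDecay Λ c (2 * C) (log 2 / T₀) := by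
  set lam := log 2 / T₀
  have hlam_le {t : ℝ} (ht : t ≤ T₀) : lam * t ≤ log 2 := by
    calc lam * t ≤ lam * T₀ := by gcongr
      _ = log 2 := div_mul_cancel₀ _ hT₀.ne'
  have hbase : ∀ t ∈ Icc 0 T₀, ∀ x ∈ Λ, c t x ≤ 2 * C * exp (-lam * t) := by
    intro t ht x hx
    have hexp : exp (-log 2) ≤ exp (-lam * t) := exp_le_exp.2 (by linarith [hlam_le ht.2])
    rw [exp_neg, exp_log two_pos] at hexp
    nlinarith [hC t ht x hx]
  -- Induction on `⌈t⌉₊`: the contraction time `τ ≥ 1` moves `t` down by at least one unit.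
  have hind : ∀ n : ℕ, ∀ x ∈ Λ, ∀ t ∈ Icc 0 (n : ℝ), c t x ≤ 2 * C * exp (-lam * t) := by
    intro n
    induction n with
    | zero =>
      intro x hx t ht
      exact hbase t ⟨ht.1, (ht.2.trans_eq Nat.cast_zero).trans hT₀.le⟩ x hx
    | succ n ih =>
      intro x hx t ht
      by_cases htT₀ : t ≤ T₀
      · exact hbase t ⟨ht.1, htT₀⟩ x hx
      obtain ⟨τ, ⟨hτ₁, hτT₀⟩, hτc⟩ := hcontr x hx
      have hτ_le : τ ≤ t := by linarith
      have hprev := ih (ψ τ x) (hψ τ (by linarith) hx) (t - τ)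
        ⟨by linarith, by linarith [ht.2, Nat.cast_succ (R := ℝ) n]⟩
      have hsplit := hcocycle (t - τ) (by linarith) τ (by linarith) x hx
      rw [sub_add_cancel] at hsplit
      calc c t x ≤ c (t - τ) (ψ τ x) * c τ x := hsplit
        _ ≤ 2 * C * exp (-lam * (t - τ)) * (1 / 2) := by
          gcongr
          exact hc_nonneg τ (by linarith) x hx
        _ = 2 * C * exp (-lam * t) * (exp (lam * τ) / 2) := by
          rw [show -lam * (t - τ) = -lam * t + lam * τ by ring, exp_add]; ring
        _ ≤ 2 * C * exp (-lam * t) := by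
          have : exp (lam * τ) ≤ 2 := by
            simpa [exp_log two_pos] using exp_le_exp.2 (hlam_le hτT₀)
          exact mul_le_of_le_one_right (by positivity) (by linarith)
  intro x hx t ht
  exact hind ⌈t⌉₊ x hx t ⟨ht, Nat.le_ceil t⟩

lemma exists_hasUniformExpDecay [TopologicalSpace X] (hΛ : IsCompact Λ)
    (hψ : ∀ t ≥ (0 : ℝ), MapsTo (ψ t) Λ Λ)
    (hc : Continuous fun p : ℝ × X ↦ c p.1 p.2)
    (hc_nonneg : ∀ t ≥ (0 : ℝ), ∀ x ∈ Λ, 0 ≤ c t x)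
    (hcocycle : ∀ s ≥ (0 : ℝ), ∀ t ≥ (0 : ℝ), ∀ x ∈ Λ, c (s + t) x ≤ c s (ψ t x) * c t x)
    (hlim : ∀ x ∈ Λ, Tendsto (c · x) atTop (𝓝 0)) :
    ∃ K lam : ℝ, 0 < K ∧ 0 < lam ∧ HasUniformExpDecay Λ c K lam := by
  obtain ⟨T₀, hT₀_one, hT₀⟩ := exists_uniform_time_lt hΛ
    (fun t ↦ hc.comp (Continuous.prodMk_right t)) hlim 1 one_half_pos
  have hT₀_pos : 0 < T₀ := one_pos.trans_le hT₀_one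
  obtain ⟨C, hC_pos, hC⟩ :=
    ((isCompact_Icc.prod hΛ).bddAbove_image hc.continuousOn).exists_ge (1 : ℝ)
  refine ⟨2 * C, log 2 / T₀, by positivity, div_pos (log_pos one_lt_two) hT₀_pos,
    hasUniformExpDecay_of_contraction_time hψ hc_nonneg hcocycle (by linarith) hT₀_pos
      (fun t ht x hx ↦ hC _ ⟨(t, x), ⟨ht, hx⟩, rfl⟩) fun x hx ↦ ?_⟩
  obtain ⟨τ, hτ, hτc⟩ := hT₀ x hx
  exact ⟨τ, hτ, hτc.le⟩

end ExponentialDecay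

theorem uniform_exponential_bounds_of_pointwise_contraction_general
    {M : Type*} [MetricSpace M]
    (φ : ℝ → M → M)
    (Λ : Set M) (hΛcomp : IsCompact Λ) (hΛinv : ∀ t : ℝ, φ t '' Λ = Λ)
    (a b : ℝ → M → ℝ)
    (hacont : Continuous fun p : ℝ × M => a p.1 p.2)
    (hbcont : Continuous fun p : ℝ × M => b p.1 p.2)
    (hapos : ∀ t ≥ (0 : ℝ), ∀ x ∈ Λ, 0 < a t x)
    (hbpos : ∀ t ≥ (0 : ℝ), ∀ x ∈ Λ, 0 < b t x)
    -- submultiplicative cocycle property of the restricted norms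
    (hacocycle : ∀ s ≥ (0 : ℝ), ∀ t ≥ (0 : ℝ), ∀ x ∈ Λ,
      a (s + t) x ≤ a s (φ t x) * a t x)
    (hbcocycle : ∀ s ≥ (0 : ℝ), ∀ t ≥ (0 : ℝ), ∀ x ∈ Λ,
      b (s + t) x ≤ b s (φ (-t) x) * b t x)
    -- pointwise contraction along the orbit
    (halim : ∀ x ∈ Λ, Tendsto (fun t => a t x) atTop (nhds 0))
    (hblim : ∀ x ∈ Λ, Tendsto (fun t => b t x) atTop (nhds 0)) :
    ∃ K lam : ℝ, 0 < K ∧ 0 < lam ∧ ∀ x ∈ Λ, ∀ t ≥ (0 : ℝ),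
      a t x ≤ K * Real.exp (-lam * t) ∧ b t x ≤ K * Real.exp (-lam * t) := by
  have hφ (t : ℝ) : MapsTo (φ t) Λ Λ := mapsTo_iff_image_subset.2 (hΛinv t).le
  obtain ⟨Ka, lama, hKa, hlama, ha⟩ := exists_hasUniformExpDecay hΛcomp (fun t _ ↦ hφ t)
    hacont (fun t ht x hx ↦ (hapos t ht x hx).le) hacocycle halim
  obtain ⟨Kb, lamb, hKb, hlamb, hb⟩ := exists_hasUniformExpDecay hΛcomp (fun t _ ↦ hφ (-t))
    hbcont (fun t ht x hx ↦ (hbpos t ht x hx).le) hbcocycle hblim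
  refine ⟨max Ka Kb, min lama lamb, lt_max_of_lt_left hKa, lt_min hlama hlamb,
    fun x hx t ht ↦ ⟨?_, ?_⟩⟩
  · exact (ha.mono hKa.le (le_max_left _ _) (min_le_left _ _)) x hx t ht
  · exact (hb.mono hKb.le (le_max_right _ _) (min_le_right _ _)) x hx t ht

/-- Pointwise contraction of both bundles of a dominated splitting over a compact
invariant set yields uniform exponential estimates. Here `a t x` abstracts the
norm `‖P_t(x)|_{N^s_x}‖` and `b t x` the norm `‖P_{-t}(x)|_{N^u_x}‖` of the
restrictions of the linear Poincaré cocycle to the bundles of the splitting. -/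
theorem uniform_exponential_bounds_of_pointwise_contraction
    {M : Type*} [MetricSpace M] [CompactSpace M]
    (φ : ℝ → M → M)
    (hcont : Continuous fun p : ℝ × M => φ p.1 p.2)
    (h0 : ∀ x, φ 0 x = x)
    (hadd : ∀ s t x, φ (s + t) x = φ s (φ t x))
    (Λ : Set M) (hΛcomp : IsCompact Λ) (hΛinv : ∀ t : ℝ, φ t '' Λ = Λ)
    (a b : ℝ → M → ℝ)
    (hacont : Continuous fun p : ℝ × M => a p.1 p.2)
    (hbcont : Continuous fun p : ℝ × M => b p.1 p.2)
    (hapos : ∀ t ≥ (0 : ℝ), ∀ x ∈ Λ, 0 < a t x)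
    (hbpos : ∀ t ≥ (0 : ℝ), ∀ x ∈ Λ, 0 < b t x)
    (ha0 : ∀ x ∈ Λ, a 0 x = 1) (hb0 : ∀ x ∈ Λ, b 0 x = 1)
    -- submultiplicative cocycle property of the restricted norms
    (hacocycle : ∀ s ≥ (0 : ℝ), ∀ t ≥ (0 : ℝ), ∀ x ∈ Λ,
      a (s + t) x ≤ a s (φ t x) * a t x)
    (hbcocycle : ∀ s ≥ (0 : ℝ), ∀ t ≥ (0 : ℝ), ∀ x ∈ Λ,
      b (s + t) x ≤ b s (φ (-t) x) * b t x)
    -- domination: ‖P_T(x)|_{N^s_x}‖ · ‖P_{-T}(φ_T(x))|_{N^u_{φ_T(x)}}‖ ≤ 1/2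
    (T : ℝ) (hT : 0 < T)
    (hdom : ∀ x ∈ Λ, a T x * b T (φ T x) ≤ 1 / 2)
    -- pointwise contraction along the orbit
    (halim : ∀ x ∈ Λ, Tendsto (fun t => a t x) atTop (nhds 0))
    (hblim : ∀ x ∈ Λ, Tendsto (fun t => b t x) atTop (nhds 0)) :
    ∃ K lam : ℝ, 0 < K ∧ 0 < lam ∧ ∀ x ∈ Λ, ∀ t ≥ (0 : ℝ),
      a t x ≤ K * Real.exp (-lam * t) ∧ b t x ≤ K * Real.exp (-lam * t) :=
  uniform_exponential_bounds_of_pointwise_contraction_general φ Λ hΛcomp hΛinv a b hacont hbcont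
    hapos hbpos hacocycle hbcocycle halim hblim
end

section
/- If Λ⁺ is Lyapunov stable for the flow φ and Λ⁻ is Lyapunov stable for the reversed flow, then H = Λ⁺ ∩ Λ⁻ satisfies: for every x with ω(x) ∩ H ≠ ∅ and α(x) well-defined, ω(x) ⊆ Λ⁺; consequently W^s_w(H) ⊆ W^s(Λ⁺). -/
/-! Once the orbit of `x` comes close to a point of `ω(x) ∩ Λ⁺`, Lyapunov stability keeps it in
the `δ`-thickening of `Λ⁺` for all later times, so `ω(x)` lies in every closed `δ`-thickening of
`Λ⁺`, whose intersection is the closed set `Λ⁺`. -/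

open Set Filter

/-- The omega-limit set of a point under a flow `φ`. -/
def omegaSet {M : Type*} [MetricSpace M] (φ : ℝ → M → M) (x : M) : Set M :=
  {y | ∃ tk : ℕ → ℝ, Tendsto tk atTop atTop ∧
    Tendsto (fun n => φ (tk n) x) atTop (nhds y)}

/-- A set is invariant under the flow `φ`. -/
def FlowInvariant {M : Type*} [MetricSpace M] (φ : ℝ → M → M) (Λ : Set M) : Prop :=
  ∀ t : ℝ, φ t '' Λ = Λ

/-- Lyapunov stability of a set for the flow `φ`. -/
def LyapunovStable {M : Type*} [MetricSpace M] (φ : ℝ → M → M) (Λ : Set M) : Prop :=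
  ∀ U : Set M, IsOpen U → Λ ⊆ U →
    ∃ V : Set M, IsOpen V ∧ Λ ⊆ V ∧ V ⊆ U ∧ ∀ t ≥ (0 : ℝ), φ t '' V ⊆ U

section

variable {M : Type*} [MetricSpace M] {φ : ℝ → M → M} {x : M}

theorem omegaSet_subset_closure_of_eventually_mem {U : Set M}
    (hU : ∀ᶠ t in atTop, φ t x ∈ U) : omegaSet φ x ⊆ closure U :=
  fun _ ⟨_, htk, hconv⟩ => mem_closure_of_tendsto hconv (htk.eventually hU)

theorem eventually_mem_of_lyapunovStable_of_mem_omegaSet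
    (hadd : ∀ s t x, φ (s + t) x = φ s (φ t x)) {Λ U : Set M}
    (hstable : LyapunovStable φ Λ) (hU : IsOpen U) (hΛU : Λ ⊆ U)
    (hmeet : (omegaSet φ x ∩ Λ).Nonempty) : ∀ᶠ t in atTop, φ t x ∈ U := by
  obtain ⟨V, hV, hΛV, -, hVU⟩ := hstable U hU hΛU
  obtain ⟨y, ⟨tk, htk, hconv⟩, hyΛ⟩ := hmeet
  obtain ⟨n, hnV⟩ := (hconv.eventually (hV.mem_nhds (hΛV hyΛ))).exists
  filter_upwards [eventually_ge_atTop (tk n)] with t ht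
  have hsplit : φ t x = φ (t - tk n) (φ (tk n) x) := by rw [← hadd, sub_add_cancel]
  exact hsplit ▸ hVU _ (sub_nonneg.2 ht) (mem_image_of_mem _ hnV)

theorem omegaSet_subset_of_lyapunovStable
    (hadd : ∀ s t x, φ (s + t) x = φ s (φ t x)) {Λ : Set M} (hΛ : IsClosed Λ)
    (hstable : LyapunovStable φ Λ) (hmeet : (omegaSet φ x ∩ Λ).Nonempty) :
    omegaSet φ x ⊆ Λ := by
  rw [← hΛ.closure_eq, Metric.closure_eq_iInter_cthickening]
  refine subset_iInter₂ fun δ hδ => ?_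
  calc omegaSet φ x ⊆ closure (Metric.thickening δ Λ) :=
        omegaSet_subset_closure_of_eventually_mem <|
          eventually_mem_of_lyapunovStable_of_mem_omegaSet hadd hstable
            Metric.isOpen_thickening (Metric.self_subset_thickening hδ Λ) hmeet
    _ ⊆ Metric.cthickening δ Λ := Metric.closure_thickening_subset_cthickening δ Λ

end

theorem weak_basin_subset_basin_of_intersection_general
    {M : Type*} [MetricSpace M]
    (φ : ℝ → M → M)
    (hadd : ∀ s t x, φ (s + t) x = φ s (φ t x))
    (Λp Λm : Set M)
    (hpcomp : IsCompact Λp)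
    (hpstable : LyapunovStable φ Λp) :
    {x : M | (omegaSet φ x ∩ (Λp ∩ Λm)).Nonempty} ⊆
      {x : M | omegaSet φ x ⊆ Λp} :=
  fun _ ⟨y, hyω, hyp, _⟩ =>
    omegaSet_subset_of_lyapunovStable hadd hpcomp.isClosed hpstable ⟨y, hyω, hyp⟩

/-- If `Λ⁺` is Lyapunov stable for `φ` and `Λ⁻` is Lyapunov stable for the
reversed flow, then the weak basin of `H = Λ⁺ ∩ Λ⁻` is contained in the basin
of `Λ⁺`. -/
theorem weak_basin_subset_basin_of_intersection
    {M : Type*} [MetricSpace M] [CompactSpace M]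
    (φ : ℝ → M → M)
    (hcont : Continuous fun p : ℝ × M => φ p.1 p.2)
    (h0 : ∀ x, φ 0 x = x)
    (hadd : ∀ s t x, φ (s + t) x = φ s (φ t x))
    (Λp Λm : Set M)
    (hpcomp : IsCompact Λp) (hpinv : FlowInvariant φ Λp)
    (hmcomp : IsCompact Λm) (hminv : FlowInvariant φ Λm)
    (hpstable : LyapunovStable φ Λp)
    (hmstable : LyapunovStable (fun t x => φ (-t) x) Λm) :
    {x : M | (omegaSet φ x ∩ (Λp ∩ Λm)).Nonempty} ⊆
      {x : M | omegaSet φ x ⊆ Λp} :=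
  weak_basin_subset_basin_of_intersection_general φ hadd Λp Λm hpcomp hpstable
end
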